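/- Let $(W,S)$ be a Coxeter group. For any $x, y \in W$, the set $\{uu' : u \le x, u' \le y\}$ (where $\le$ is the Bruhat order) has a unique maximal element with respect to the Bruhat order, denoted $x * y$ (the Demazure product). -/

import Mathlib

/-!
Write `s ⋆ w` for the longer of `w` and `s w`. For reduced words `ωx`, `ωy` of `x`, `y`, the
maximum is `m = s₁ ⋆ (s₂ ⋆ ⋯ (sₙ ⋆ 1))` along the letters `s₁ ⋯ sₙ` of `ωx ++ ωy`. By
construction `m` is the product of a subword of `ωx ++ ωy`, hence of the form `u u'` with
`u ≤ x`, `u' ≤ y`. Conversely, `w ↦ s ⋆ w` is monotone and `s w ≤ s ⋆ w` (the lifting property),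
so every subword product of `ωx ++ ωy` lies below `m`; by the subword property this covers all
`u u'` with `u ≤ x`, `u' ≤ y`. Here the subword property is needed for *every* reduced word, not
just one: it follows from the description of the Bruhat order by chains of length-decreasing
right multiplications by reflections, together with the strong exchange property, which comes
from Tits' action of `W` on `W × {±1}`.
-/

/-- The Bruhat order on a Coxeter group, via the subword property: `u ≤ w` iff some
(equivalently, any) reduced word for `w` contains a subword whose product is `u`. -/
def CoxeterSystem.BruhatLE {B W : Type*} [Group W] {M : CoxeterMatrix B}
    (cs : CoxeterSystem M W) (u w : W) : Prop :=
  ∃ ω : List B, cs.IsReduced ω ∧ cs.wordProd ω = w ∧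
    ∃ ω' : List B, ω'.Sublist ω ∧ cs.wordProd ω' = u

namespace CoxeterSystem

variable {B W : Type*} [Group W] {M : CoxeterMatrix B} (cs : CoxeterSystem M W)

local prefix:100 "s" => cs.simple
local prefix:100 "π" => cs.wordProd
local prefix:100 "ℓ" => cs.length
local prefix:100 "ris" => cs.rightInvSeq
local prefix:100 "lis" => cs.leftInvSeq

open List

theorem alternatingWord_two_mul_reverse (i i' : B) (p : ℕ) :
    (alternatingWord i i' (2 * p)).reverse = alternatingWord i' i (2 * p) := by
  induction p with
  | zero => rfl
  | succ p ih =>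
    rw [Nat.mul_succ, alternatingWord_succ', alternatingWord_succ', alternatingWord_succ,
      alternatingWord_succ]
    simp [ih]

theorem wordProd_alternatingWord_odd_periodic (i i' : B) (k : ℕ) :
    π alternatingWord i' i (2 * (k + M i i') + 1) = π alternatingWord i' i (2 * k + 1) := by
  have hdiv (n : ℕ) : (2 * n + 1) / 2 = n := by omega
  rw [prod_alternatingWord_eq_mul_pow, prod_alternatingWord_eq_mul_pow, hdiv, hdiv, pow_add,
    simple_mul_simple_pow', mul_one]
  simp

theorem leftInvSeq_alternatingWord_eq_append (i i' : B) :
    ∃ l : List W, lis (alternatingWord i i' (2 * M i i')) = l ++ l := by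
  set L := lis (alternatingWord i i' (2 * M i i'))
  have hL : L.length = M i i' + M i i' := by simp [L]; omega
  have hper (k : ℕ) (hk : k + M i i' < L.length) : L[k + M i i'] = L[k] := by
    simp only [L, cs.getElem_leftInvSeq_alternatingWord i i' (M i i') (k + M i i') (by omega),
      cs.getElem_leftInvSeq_alternatingWord i i' (M i i') k (by omega)]
    exact cs.wordProd_alternatingWord_odd_periodic i i' k
  refine ⟨L.take (M i i'), List.ext_getElem (by simp [hL]) fun k hk _ => ?_⟩
  rw [List.getElem_append]
  split_ifs with hkM
  · simp
  · obtain ⟨k, rfl⟩ := Nat.exists_eq_add_of_le (not_lt.mp (by simpa [hL] using hkM))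
    simp [hL, add_comm (M i i') k, hper]

theorem rightInvSeq_alternatingWord_eq_append (i i' : B) :
    ∃ l : List W, ris (alternatingWord i i' (2 * M i i')) = l ++ l := by
  obtain ⟨l, hl⟩ := cs.leftInvSeq_alternatingWord_eq_append i' i
  refine ⟨l.reverse, ?_⟩
  rw [← alternatingWord_two_mul_reverse, rightInvSeq_reverse, M.symmetric, hl, reverse_append]

theorem prod_map_alternatingWord_two_mul {G : Type*} [Monoid G] (f : B → G) (i i' : B) (k : ℕ) :
    ((alternatingWord i i' (2 * k)).map f).prod = (f i * f i') ^ k := by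
  induction k with
  | zero => simp [alternatingWord]
  | succ k ih =>
    rw [Nat.mul_succ, alternatingWord_succ', alternatingWord_succ']
    simp [ih, pow_succ', mul_assoc]

section SignedReflections

variable [DecidableEq W]

/-- Tits' action. That it descends to `W` (`isLiftable_signedReflAct`) is what makes the parity of
the number of occurrences of `t` in the right inversion sequence of a word depend only on the
product of the word. -/
def signedReflAct (i : B) : Function.End (W × ℤˣ) :=
  fun p => (s i * p.1 * s i, (if p.1 = s i then -1 else 1) * p.2)

theorem prod_map_signedReflAct_apply (ω : List B) (t : W) (ε : ℤˣ) :
    (ω.map cs.signedReflAct).prod (t, ε) = (π ω * t * (π ω)⁻¹, (-1) ^ (ris ω).count t * ε) := by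
  induction ω with
  | nil => simp; rfl
  | cons i ω ih =>
    have hcond : π ω * t * (π ω)⁻¹ = s i ↔ (π ω)⁻¹ * s i * π ω = t := by
      constructor <;> intro h <;> rw [← h] <;> group
    rw [map_cons, prod_cons]
    change cs.signedReflAct i ((ω.map cs.signedReflAct).prod (t, ε)) = _
    rw [ih]
    simp only [signedReflAct, rightInvSeq, count_cons, beq_iff_eq, hcond]
    split_ifs <;> simp [pow_succ, mul_assoc, wordProd_cons]

theorem isLiftable_signedReflAct : M.IsLiftable cs.signedReflAct := by
  intro i i'
  rw [← prod_map_alternatingWord_two_mul]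
  funext ⟨t, ε⟩
  obtain ⟨l, hl⟩ := cs.rightInvSeq_alternatingWord_eq_append i i'
  have hprod : π alternatingWord i i' (2 * M i i') = 1 := by
    simp [prod_alternatingWord_eq_mul_pow]
  rw [prod_map_signedReflAct_apply, hprod, hl, count_append, ← two_mul, pow_mul]
  simp
  rfl

def signedReflRep : W →* Function.End (W × ℤˣ) :=
  cs.lift ⟨cs.signedReflAct, cs.isLiftable_signedReflAct⟩

theorem signedReflRep_wordProd (ω : List B) :
    cs.signedReflRep (π ω) = (ω.map cs.signedReflAct).prod := by
  rw [wordProd, map_list_prod, map_map]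
  congr 2
  funext i
  exact cs.lift_apply_simple _ i

def reflSign (w t : W) : ℤˣ := (cs.signedReflRep w (t, 1)).2

theorem signedReflRep_apply (w t : W) (ε : ℤˣ) :
    cs.signedReflRep w (t, ε) = (w * t * w⁻¹, cs.reflSign w t * ε) := by
  obtain ⟨ω, rfl⟩ := cs.wordProd_surjective w
  simp [reflSign, signedReflRep_wordProd, prod_map_signedReflAct_apply]

theorem reflSign_wordProd (ω : List B) (t : W) :
    cs.reflSign (π ω) t = (-1) ^ (ris ω).count t := by
  simp [reflSign, signedReflRep_wordProd, prod_map_signedReflAct_apply]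

theorem reflSign_mul (v w t : W) :
    cs.reflSign (v * w) t = cs.reflSign v (w * t * w⁻¹) * cs.reflSign w t := by
  rw [reflSign, map_mul]
  change (cs.signedReflRep v (cs.signedReflRep w (t, 1))).2 = _
  simp [signedReflRep_apply]

theorem reflSign_one (t : W) : cs.reflSign 1 t = 1 := by
  simpa using cs.reflSign_wordProd [] t

theorem reflSign_simple_self (i : B) : cs.reflSign (s i) (s i) = -1 := by
  simpa using cs.reflSign_wordProd [i] (s i)

variable {cs} in
theorem IsReflection.reflSign_self {t : W} (ht : cs.IsReflection t) : cs.reflSign t t = -1 := by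
  obtain ⟨w, i, rfl⟩ := ht
  have hconj : w⁻¹ * (w * s i * w⁻¹) * w⁻¹⁻¹ = s i := by group
  have hinv := cs.reflSign_mul w w⁻¹ (w * s i * w⁻¹)
  rw [mul_inv_cancel, reflSign_one, hconj] at hinv
  rw [reflSign_mul, hconj, reflSign_mul, reflSign_simple_self, mul_inv_cancel_right,
    mul_right_comm, ← hinv, one_mul]

end SignedReflections

variable {cs}

theorem IsRightInversion.mem_rightInvSeq {ω : List B} {t : W}
    (h : cs.IsRightInversion (π ω) t) : t ∈ ris ω := by
  classical
  obtain ⟨ht, hlt⟩ := h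
  obtain ⟨ν, hν, hνω⟩ := cs.exists_isReduced (π ω * t)
  have hων : π ω = π ν * t := by rw [← hνω, mul_assoc, ht.mul_self, mul_one]
  have hνt : t ∉ ris ν := fun hmem => by
    have := (cs.isRightInversion_of_mem_rightInvSeq hν hmem).2
    rw [← hων, ← hνω] at this
    omega
  -- `t` flips the sign, and a reduced word for `π ω * t` has no `t` in its inversion sequence.
  have hsign : cs.reflSign (π ω) t = -1 := by
    rw [hων, reflSign_mul, mul_inv_cancel_right, ht.reflSign_self, reflSign_wordProd,
      count_eq_zero_of_not_mem hνt, pow_zero, one_mul]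
  rw [reflSign_wordProd] at hsign
  by_contra hnot
  rw [count_eq_zero_of_not_mem hnot, pow_zero] at hsign
  exact absurd hsign (by decide)

theorem IsRightInversion.exists_wordProd_eraseIdx {ω : List B} {t : W}
    (h : cs.IsRightInversion (π ω) t) : ∃ j < ω.length, π (ω.eraseIdx j) = π ω * t := by
  obtain ⟨j, hj, rfl⟩ := List.mem_iff_getElem.mp h.mem_rightInvSeq
  refine ⟨j, by simpa using hj, ?_⟩
  rw [← wordProd_mul_getD_rightInvSeq, getD_eq_getElem]

theorem IsRightInversion.eq_simple_mul_or_length_lt {w t : W}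
    (ht : cs.IsRightInversion w t) (i : B) :
    w * t = s i * w ∨ ℓ (s i * (w * t)) < ℓ (s i * w) := by
  obtain ⟨τ, hτ, hτw⟩ := cs.exists_isReduced (s i * w)
  have hw : π (i :: τ) = w := by rw [wordProd_cons, ← hτw, simple_mul_simple_cancel_left]
  rw [← hw] at ht
  obtain ⟨j, hj, hjt⟩ := ht.exists_wordProd_eraseIdx
  rw [hw] at hjt
  rcases j with _ | j
  · left
    rw [← hjt, eraseIdx_cons_zero, hτw]
  · right
    rw [eraseIdx_cons_succ, wordProd_cons] at hjt
    have hj' : j < τ.length := by simpa using hj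
    calc ℓ (s i * (w * t)) = ℓ (π (τ.eraseIdx j)) := by rw [← hjt, simple_mul_simple_cancel_left]
      _ ≤ (τ.eraseIdx j).length := cs.length_wordProd_le _
      _ < τ.length := by rw [length_eraseIdx_of_lt hj']; omega
      _ = ℓ (s i * w) := by rw [hτw, hτ.eq]

variable (cs)

def ChainLE : W → W → Prop :=
  Relation.ReflTransGen fun u w => ∃ t, cs.IsRightInversion w t ∧ u = w * t

variable {cs}

theorem ChainLE.refl (w : W) : cs.ChainLE w w := Relation.ReflTransGen.refl

theorem ChainLE.trans {u v w : W} (h₁ : cs.ChainLE u v) (h₂ : cs.ChainLE v w) :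
    cs.ChainLE u w :=
  Relation.ReflTransGen.trans h₁ h₂

theorem IsRightInversion.chainLE {w t : W} (h : cs.IsRightInversion w t) :
    cs.ChainLE (w * t) w :=
  .single ⟨t, h, rfl⟩

theorem ChainLE.eq_or_length_lt {u w : W} (h : cs.ChainLE u w) : u = w ∨ ℓ u < ℓ w := by
  induction h with
  | refl => exact .inl rfl
  | tail _ hstep ih =>
    obtain ⟨t, ⟨-, hlt⟩, rfl⟩ := hstep
    rcases ih with rfl | ih
    · exact .inr hlt
    · exact .inr (ih.trans hlt)

theorem ChainLE.antisymm {u w : W} (h₁ : cs.ChainLE u w) (h₂ : cs.ChainLE w u) : u = w := by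
  rcases h₁.eq_or_length_lt with h | h₁
  · exact h
  rcases h₂.eq_or_length_lt with h | h₂
  · exact h.symm
  · omega

variable (cs)

theorem chainLE_simple_mul {w : W} {i : B} (h : ℓ (s i * w) < ℓ w) :
    cs.ChainLE (s i * w) w := by
  have hrefl : cs.IsReflection (w⁻¹ * s i * w) := ⟨w⁻¹, i, by rw [inv_inv]⟩
  have hinv : cs.IsRightInversion w (w⁻¹ * s i * w) := ⟨hrefl, by simpa [mul_assoc] using h⟩
  simpa [mul_assoc] using hinv.chainLE

theorem chainLE_simple_mul_self {w : W} {i : B} (h : ℓ w < ℓ (s i * w)) :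
    cs.ChainLE w (s i * w) := by
  simpa using cs.chainLE_simple_mul (w := s i * w) (i := i) (by simpa using h)

/-- `s i ⋆ w` in the notation of the Demazure product. -/
noncomputable def simpleDemazureMul (i : B) (w : W) : W := if ℓ w < ℓ (s i * w) then s i * w else w

theorem chainLE_simpleDemazureMul (i : B) (w : W) : cs.ChainLE w (cs.simpleDemazureMul i w) := by
  unfold simpleDemazureMul
  split_ifs with h
  · exact cs.chainLE_simple_mul_self h
  · exact .refl w

theorem simple_mul_chainLE_simpleDemazureMul (i : B) (w : W) :
    cs.ChainLE (s i * w) (cs.simpleDemazureMul i w) := by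
  unfold simpleDemazureMul
  split_ifs with h
  · exact .refl _
  · exact cs.chainLE_simple_mul (by rcases cs.length_simple_mul w i with h' | h' <;> omega)

variable {cs}

theorem IsRightInversion.simpleDemazureMul_chainLE {w t : W} (ht : cs.IsRightInversion w t)
    (i : B) : cs.ChainLE (cs.simpleDemazureMul i (w * t)) (cs.simpleDemazureMul i w) := by
  by_cases hwt : ℓ (w * t) < ℓ (s i * (w * t))
  swap
  · rw [simpleDemazureMul, if_neg hwt]
    exact ht.chainLE.trans (cs.chainLE_simpleDemazureMul i w)
  rw [simpleDemazureMul, if_pos hwt]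
  have hlt := ht.2
  by_cases hw : ℓ w < ℓ (s i * w)
  · rw [simpleDemazureMul, if_pos hw, ← mul_assoc]
    refine IsRightInversion.chainLE ⟨ht.1, ?_⟩
    rcases cs.length_simple_mul (w * t) i with h | h <;>
      rcases cs.length_simple_mul w i with h' | h' <;> rw [mul_assoc] <;> omega
  · rw [simpleDemazureMul, if_neg hw]
    rcases ht.eq_simple_mul_or_length_lt i with h | h
    · rw [h, simple_mul_simple_cancel_left]
      exact .refl w
    · have hdown : ℓ (s i * w) < ℓ w := by
        rcases cs.length_simple_mul w i with h' | h' <;> omega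
      rw [← mul_assoc] at h ⊢
      exact (IsRightInversion.chainLE ⟨ht.1, h⟩).trans (cs.chainLE_simple_mul hdown)

theorem ChainLE.simpleDemazureMul {u w : W} (h : cs.ChainLE u w) (i : B) :
    cs.ChainLE (cs.simpleDemazureMul i u) (cs.simpleDemazureMul i w) := by
  induction h with
  | refl => exact .refl _
  | tail _ hstep ih =>
    obtain ⟨t, ht, rfl⟩ := hstep
    exact ih.trans (ht.simpleDemazureMul_chainLE i)

theorem ChainLE.exists_sublist {u w : W} (h : cs.ChainLE u w) {ω : List B} (hω : π ω = w) :
    ∃ σ, σ <+ ω ∧ π σ = u := by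
  induction h generalizing ω with
  | refl => exact ⟨ω, .refl ω, hω⟩
  | tail _ hstep ih =>
    obtain ⟨t, ht, rfl⟩ := hstep
    subst hω
    obtain ⟨j, -, hj⟩ := ht.exists_wordProd_eraseIdx
    obtain ⟨σ, hσ, hσu⟩ := ih hj
    exact ⟨σ, hσ.trans (eraseIdx_sublist ω j), hσu⟩

variable (cs)

noncomputable def demazureProd (ω : List B) : W := ω.foldr cs.simpleDemazureMul 1

theorem chainLE_demazureProd_of_sublist {σ ω : List B} (h : σ <+ ω) :
    cs.ChainLE (π σ) (cs.demazureProd ω) := by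
  induction h with
  | slnil => exact .refl 1
  | cons i _ ih => exact ih.trans (cs.chainLE_simpleDemazureMul i _)
  | cons_cons i _ ih =>
    rw [wordProd_cons]
    exact (cs.simple_mul_chainLE_simpleDemazureMul i _).trans (ih.simpleDemazureMul i)

theorem exists_sublist_wordProd_eq_demazureProd (ω : List B) :
    ∃ σ, σ <+ ω ∧ π σ = cs.demazureProd ω := by
  induction ω with
  | nil => exact ⟨[], .slnil, rfl⟩
  | cons i ω ih =>
    obtain ⟨σ, hσ, hσω⟩ := ih
    simp only [demazureProd, foldr_cons] at hσω ⊢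
    rw [← hσω, simpleDemazureMul]
    split_ifs
    · exact ⟨i :: σ, hσ.cons_cons i, wordProd_cons ..⟩
    · exact ⟨σ, hσ.cons i, rfl⟩

variable {cs} in
theorem IsReduced.demazureProd_eq {ω : List B} (h : cs.IsReduced ω) : cs.demazureProd ω = π ω := by
  induction ω with
  | nil => rfl
  | cons i ω ih =>
    have hω : cs.IsReduced ω := by simpa using h.drop 1
    have hlt : ℓ (π ω) < ℓ (s i * π ω) := by
      have := h.eq
      rw [wordProd_cons, length_cons, ← hω.eq] at this
      omega
    simp only [demazureProd, foldr_cons] at ih ⊢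
    rw [ih hω, simpleDemazureMul, if_pos hlt, wordProd_cons]

theorem bruhatLE_iff_chainLE {u w : W} : cs.BruhatLE u w ↔ cs.ChainLE u w := by
  constructor
  · rintro ⟨ω, hω, rfl, σ, hσ, rfl⟩
    simpa [hω.demazureProd_eq] using cs.chainLE_demazureProd_of_sublist hσ
  · intro h
    obtain ⟨ω, hω, rfl⟩ := cs.exists_isReduced w
    obtain ⟨σ, hσ, hσu⟩ := h.exists_sublist rfl
    exact ⟨ω, hω, rfl, σ, hσ, hσu⟩

variable {cs}

theorem BruhatLE.exists_sublist {u w : W} (h : cs.BruhatLE u w) {ω : List B} (hω : π ω = w) :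
    ∃ σ, σ <+ ω ∧ π σ = u :=
  ((bruhatLE_iff_chainLE cs).mp h).exists_sublist hω

theorem BruhatLE.antisymm {u w : W} (h₁ : cs.BruhatLE u w) (h₂ : cs.BruhatLE w u) : u = w :=
  ((bruhatLE_iff_chainLE cs).mp h₁).antisymm ((bruhatLE_iff_chainLE cs).mp h₂)

variable (cs)

theorem bruhatLE_demazureProd_of_sublist {σ ω : List B} (h : σ <+ ω) :
    cs.BruhatLE (π σ) (cs.demazureProd ω) :=
  (bruhatLE_iff_chainLE cs).mpr (cs.chainLE_demazureProd_of_sublist h)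

end CoxeterSystem

/-- For any `x, y ∈ W`, the set `{u u' : u ≤ x, u' ≤ y}` (Bruhat order)
has a unique maximal element (the Demazure product `x * y`). -/
theorem stmt1 {B W : Type*} [Group W] {M : CoxeterMatrix B} (cs : CoxeterSystem M W)
    (x y : W) :
    ∃! m : W, (∃ u u' : W, cs.BruhatLE u x ∧ cs.BruhatLE u' y ∧ m = u * u') ∧
      ∀ z : W, (∃ u u' : W, cs.BruhatLE u x ∧ cs.BruhatLE u' y ∧ z = u * u') →
        cs.BruhatLE z m := by
  obtain ⟨ωx, hx, rfl⟩ := cs.exists_isReduced x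
  obtain ⟨ωy, hy, rfl⟩ := cs.exists_isReduced y
  have hmem : ∃ u u', cs.BruhatLE u (cs.wordProd ωx) ∧ cs.BruhatLE u' (cs.wordProd ωy) ∧
      cs.demazureProd (ωx ++ ωy) = u * u' := by
    obtain ⟨σ, hσ, hσm⟩ := cs.exists_sublist_wordProd_eq_demazureProd (ωx ++ ωy)
    obtain ⟨σx, σy, rfl, hσx, hσy⟩ := List.sublist_append_iff.mp hσ
    exact ⟨_, _, ⟨ωx, hx, rfl, σx, hσx, rfl⟩, ⟨ωy, hy, rfl, σy, hσy, rfl⟩,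
      by rw [← hσm, cs.wordProd_append]⟩
  have hmax : ∀ z, (∃ u u', cs.BruhatLE u (cs.wordProd ωx) ∧ cs.BruhatLE u' (cs.wordProd ωy) ∧
      z = u * u') → cs.BruhatLE z (cs.demazureProd (ωx ++ ωy)) := by
    rintro _ ⟨u, u', hu, hu', rfl⟩
    obtain ⟨σx, hσx, rfl⟩ := hu.exists_sublist rfl
    obtain ⟨σy, hσy, rfl⟩ := hu'.exists_sublist rfl
    rw [← cs.wordProd_append]
    exact cs.bruhatLE_demazureProd_of_sublist (hσx.append hσy)
  exact ⟨_, ⟨hmem, hmax⟩, fun m ⟨hm, hm'⟩ => (hmax m hm).antisymm (hm' _ hmem)⟩
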